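/- For row-stochastic matrices, the ergodic coefficient is supermultiplicatively compatible with products in the sense that λ(AB) ≤ λ(A)·λ(B), where λ(P) = 1 − γ(P). -/
import Mathlib


def RowStochastic {m n : Type*} [Fintype n] (A : Matrix m n ℝ) : Prop :=
  (∀ i j, 0 ≤ A i j) ∧ ∀ i, ∑ j, A i j = 1

noncomputable def ergCoef {N : ℕ} (P : Matrix (Fin N) (Fin N) ℝ) : ℝ :=
  ⨅ i₁, ⨅ i₂, ∑ j, min (P i₁ j) (P i₂ j)

noncomputable def lambdaCoef {N : ℕ} (P : Matrix (Fin N) (Fin N) ℝ) : ℝ :=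
  1 - ergCoef P

noncomputable def deltaCoef {N : ℕ} (P : Matrix (Fin N) (Fin N) ℝ) : ℝ :=
  ⨆ j, ⨆ i₁, ⨆ i₂, |P i₁ j - P i₂ j|

def Scrambling {N : ℕ} (P : Matrix (Fin N) (Fin N) ℝ) : Prop :=
  0 < ergCoef P

lemma ergCoef_le {N : ℕ} (P : Matrix (Fin N) (Fin N) ℝ) (i₁ i₂ : Fin N) :
    ergCoef P ≤ ∑ j, min (P i₁ j) (P i₂ j) := by
  have h1 : ergCoef P ≤ ⨅ i₂', ∑ j, min (P i₁ j) (P i₂' j) :=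
    ciInf_le (Set.Finite.bddBelow (Set.finite_range _)) i₁
  exact h1.trans (ciInf_le (Set.Finite.bddBelow (Set.finite_range _)) i₂)

theorem stmt_15 {N : ℕ} (A B : Matrix (Fin N) (Fin N) ℝ)
    (hA : RowStochastic A) (hB : RowStochastic B) :
    lambdaCoef (A * B) ≤ lambdaCoef A * lambdaCoef B := by
  classical
  unfold lambdaCoef
  rcases isEmpty_or_nonempty (Fin N) with hN | hN
  · have hz : ∀ P : Matrix (Fin N) (Fin N) ℝ, ergCoef P = 0 := by
      intro P; simp [ergCoef, Real.iInf_of_isEmpty]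
    rw [hz, hz, hz]; norm_num
  · set γA := ergCoef A with hγA
    set γB := ergCoef B with hγB
    have hB0 : 0 ≤ γB := le_ciInf fun i₁ => le_ciInf fun i₂ =>
      Finset.sum_nonneg fun j _ => le_min (hB.1 i₁ j) (hB.1 i₂ j)
    have i0 : Fin N := Classical.arbitrary _
    have hA1 : γA ≤ 1 := by
      calc γA ≤ ∑ j, min (A i0 j) (A i0 j) := ergCoef_le A i0 i0
        _ = 1 := by simp [hA.2 i0]
    have hB1 : γB ≤ 1 := by
      calc γB ≤ ∑ j, min (B i0 j) (B i0 j) := ergCoef_le B i0 i0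
        _ = 1 := by simp [hB.2 i0]
    have key : ∀ i₁ i₂ : Fin N,
        1 - (1 - γA) * (1 - γB) ≤ ∑ j, min ((A * B) i₁ j) ((A * B) i₂ j) := by
      intro i₁ i₂
      set m : Fin N → ℝ := fun k => min (A i₁ k) (A i₂ k) with hm
      set r1 : Fin N → ℝ := fun k => A i₁ k - m k with hr1
      set r2 : Fin N → ℝ := fun k => A i₂ k - m k with hr2
      set s : ℝ := 1 - ∑ k, m k with hs
      have hr1nn : ∀ k, 0 ≤ r1 k := fun k => sub_nonneg.mpr (min_le_left _ _)
      have hr2nn : ∀ k, 0 ≤ r2 k := fun k => sub_nonneg.mpr (min_le_right _ _)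
      have hr1sum : ∑ k, r1 k = s := by
        simp only [hr1, Finset.sum_sub_distrib, hA.2 i₁, hs]
      have hr2sum : ∑ k, r2 k = s := by
        simp only [hr2, Finset.sum_sub_distrib, hA.2 i₂, hs]
      have hs0 : 0 ≤ s := hr1sum ▸ Finset.sum_nonneg fun k _ => hr1nn k
      have hsA : s ≤ 1 - γA := by
        have := ergCoef_le A i₁ i₂
        rw [hs]; linarith
      set X : Fin N → ℝ := fun j => ∑ k, r1 k * B k j with hX
      set Y : Fin N → ℝ := fun j => ∑ k, r2 k * B k j with hY
      -- decomposition of rows of A*B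
      have hmin : ∀ j, min ((A * B) i₁ j) ((A * B) i₂ j)
          = (∑ k, m k * B k j) + min (X j) (Y j) := by
        intro j
        have h1 : (A * B) i₁ j = (∑ k, m k * B k j) + X j := by
          rw [Matrix.mul_apply, hX, ← Finset.sum_add_distrib]
          exact Finset.sum_congr rfl fun k _ => by simp [hr1]; ring
        have h2 : (A * B) i₂ j = (∑ k, m k * B k j) + Y j := by
          rw [Matrix.mul_apply, hY, ← Finset.sum_add_distrib]
          exact Finset.sum_congr rfl fun k _ => by simp [hr2]; ring
        rw [h1, h2, min_add_add_left]
      have hmsum : ∑ j, ∑ k, m k * B k j = 1 - s := by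
        rw [Finset.sum_comm]
        have : ∀ k ∈ Finset.univ, ∑ j, m k * B k j = m k := fun k _ => by
          rw [← Finset.mul_sum, hB.2 k, mul_one]
        rw [Finset.sum_congr rfl this, hs]; ring
      set T : ℝ := ∑ j, min (X j) (Y j) with hT
      have hTnn : 0 ≤ T := Finset.sum_nonneg fun j _ => le_min
        (Finset.sum_nonneg fun k _ => mul_nonneg (hr1nn k) (hB.1 k j))
        (Finset.sum_nonneg fun k _ => mul_nonneg (hr2nn k) (hB.1 k j))
      -- key pointwise bound
      have hZ : ∀ j, ∑ k, ∑ l, r1 k * r2 l * min (B k j) (B l j) ≤ s * min (X j) (Y j) := by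
        intro j
        have h1 : ∑ k, ∑ l, r1 k * r2 l * min (B k j) (B l j) ≤ s * X j := by
          rw [Finset.sum_comm, ← hr2sum, Finset.sum_mul]
          refine Finset.sum_le_sum fun l _ => ?_
          rw [hX, Finset.mul_sum]
          refine Finset.sum_le_sum fun k _ => ?_
          have : r1 k * r2 l * min (B k j) (B l j) ≤ r1 k * r2 l * B k j :=
            mul_le_mul_of_nonneg_left (min_le_left _ _)
              (mul_nonneg (hr1nn k) (hr2nn l))
          linarith [this]
        have h2 : ∑ k, ∑ l, r1 k * r2 l * min (B k j) (B l j) ≤ s * Y j := by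
          rw [← hr1sum, Finset.sum_mul]
          refine Finset.sum_le_sum fun k _ => ?_
          rw [hY, Finset.mul_sum]
          refine Finset.sum_le_sum fun l _ => ?_
          have : r1 k * r2 l * min (B k j) (B l j) ≤ r1 k * r2 l * B l j :=
            mul_le_mul_of_nonneg_left (min_le_right _ _)
              (mul_nonneg (hr1nn k) (hr2nn l))
          linarith [this]
        have := mul_min_of_nonneg (X j) (Y j) hs0
        rw [this]
        exact le_min h1 h2
      have hZsum : s * (s * γB) ≤ s * T := by
        have h1 : ∑ j, ∑ k, ∑ l, r1 k * r2 l * min (B k j) (B l j) ≤ s * T := by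
          rw [hT, Finset.mul_sum]
          exact Finset.sum_le_sum fun j _ => hZ j
        have h2 : s * (s * γB) ≤ ∑ j, ∑ k, ∑ l, r1 k * r2 l * min (B k j) (B l j) := by
          rw [Finset.sum_comm]
          have : ∀ k ∈ Finset.univ,
              r1 k * (s * γB) ≤ ∑ j, ∑ l, r1 k * r2 l * min (B k j) (B l j) := by
            intro k _
            rw [Finset.sum_comm]
            have : ∀ l ∈ Finset.univ,
                r1 k * (r2 l * γB) ≤ ∑ j, r1 k * r2 l * min (B k j) (B l j) := by
              intro l _
              rw [← Finset.mul_sum]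
              have := ergCoef_le B k l
              have h := mul_le_mul_of_nonneg_left this
                (mul_nonneg (hr1nn k) (hr2nn l))
              calc r1 k * (r2 l * γB) = r1 k * r2 l * γB := by ring
                _ ≤ r1 k * r2 l * ∑ j, min (B k j) (B l j) := h
            calc r1 k * (s * γB) = ∑ l, r1 k * (r2 l * γB) := by
                  rw [← Finset.mul_sum, ← Finset.sum_mul, hr2sum]
              _ ≤ _ := Finset.sum_le_sum this
          calc s * (s * γB) = ∑ k, r1 k * (s * γB) := by
                rw [← Finset.sum_mul, hr1sum]
            _ ≤ _ := Finset.sum_le_sum this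
        linarith
      have hsT : s * γB ≤ T := by
        rcases eq_or_lt_of_le hs0 with h | h
        · rw [← h]; simpa using hTnn
        · exact le_of_mul_le_mul_left hZsum h
      have hsum : ∑ j, min ((A * B) i₁ j) ((A * B) i₂ j) = (1 - s) + T := by
        rw [Finset.sum_congr rfl fun j _ => hmin j, Finset.sum_add_distrib, hmsum, hT]
      rw [hsum]
      have hfin : s * (1 - γB) ≤ (1 - γA) * (1 - γB) :=
        mul_le_mul_of_nonneg_right hsA (by linarith)
      nlinarith [hsT]
    have hAB : 1 - (1 - γA) * (1 - γB) ≤ ergCoef (A * B) :=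
      le_ciInf fun i₁ => le_ciInf fun i₂ => key i₁ i₂
    linarith
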